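/- Let G be a labeled finite simple graph with corank(A(G)+E) = 0 over Z_2, and let G~ be obtained by Ω_g2 (adding non-adjacent vertices u labeled + and v labeled − with identical neighborhoods in G). Then the writhe numbers coincide: w(G~) = w(G). In particular, corank B_u(G~) = corank B_v(G~), where B_x denotes A+E with the diagonal entry at x changed from 1 to 0. -/

import Mathlib

open Matrix LaurentPolynomial
open scoped Classical

noncomputable section

def adjMatS {V : Type} (G : SimpleGraph V) (s : Finset V) : Matrix s s (ZMod 2) :=
  fun i j => if G.Adj i.1 j.1 then 1 else 0

def corankS {V : Type} (G : SimpleGraph V) (s : Finset V) : ℕ :=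
  s.card - (adjMatS G s).rank

def adjMat {V : Type} [Fintype V] (G : SimpleGraph V) : Matrix V V (ZMod 2) :=
  fun i j => if G.Adj i j then 1 else 0

def corankM {m : Type} [Fintype m] (M : Matrix m m (ZMod 2)) : ℕ :=
  Fintype.card m - M.rank

def alphaCount {V : Type} [Fintype V] (σ : V → Bool) (s : Finset V) : ℕ :=
  (s.filter (fun i => σ i = false)).card + ((sᶜ).filter (fun i => σ i = true)).card

def bracket {V : Type} [Fintype V] (G : SimpleGraph V) (σ : V → Bool) : LaurentPolynomial ℚ :=
  ∑ s : Finset V, T (2 * (alphaCount σ s : ℤ) - (Fintype.card V : ℤ)) *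
    (-T 2 - T (-2)) ^ (corankS G s)

def lspan (p : LaurentPolynomial ℚ) : ℤ := (WithBot.unbotD 0 p.coeff.support.max) - (WithTop.untopD 0 p.coeff.support.min)

def Bmat {V : Type} [Fintype V] (G : SimpleGraph V) (x : V) : Matrix V V (ZMod 2) :=
  adjMat G + 1 + Matrix.single x x 1

def writhe {V : Type} [Fintype V] (G : SimpleGraph V) (σ : V → Bool) : ℤ :=
  ∑ x, (-1 : ℤ) ^ (corankM (Bmat G x)) * (if σ x then 1 else -1)

def extAdj {V : Type} (G : SimpleGraph V) (N : Set V) : V ⊕ Bool → V ⊕ Bool → Prop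
  | .inl i, .inl j => G.Adj i j
  | .inl i, .inr _ => i ∈ N
  | .inr _, .inl j => j ∈ N
  | .inr _, .inr _ => False

def ext2 {V : Type} (G : SimpleGraph V) (N : Set V) : SimpleGraph (V ⊕ Bool) where
  Adj := extAdj G N
  symm := by
    constructor
    rintro (i|b) (j|c) h
    · exact G.symm.symm _ _ h
    · exact h
    · exact h
    · exact h
  loopless := by
    constructor
    rintro (i|b) h
    · exact G.irrefl h
    · exact h

def optExt {V : Type} (G : SimpleGraph V) : SimpleGraph (Option V) where
  Adj x y := match x, y with
    | some i, some j => G.Adj i j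
    | _, _ => False
  symm := by
    constructor
    rintro (_|i) (_|j) h
    · exact h
    · exact h
    · exact h
    · exact G.symm.symm _ _ h
  loopless := by
    constructor
    rintro (_|i) h
    · exact h
    · exact G.irrefl h

/-!
For an old vertex `x`, `B_x(G~)` is the block matrix with corner `B_x(G)`, off-diagonal blocks
two copies of the indicator column `n` of the common neighbourhood and its transpose, and the
identity on the two new vertices. Its Schur complement is `B_x(G) - 2 n nᵀ = B_x(G)` over `ℤ/2`,
so the corank at `x` is unchanged. Swapping `u` and `v` is an automorphism of `G~`, so
`corank B_u = corank B_v` and the contributions `±(-1)^corank` of `u` and `v` cancel.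
-/

namespace Matrix

theorem replicateCol_mul_replicateRow_bool {R : Type*} [Ring R] [CharP R 2] {m n : Type*}
    (v : m → R) (w : n → R) : replicateCol Bool v * replicateRow Bool w = 0 := by
  ext i j
  simp [mul_apply, ← two_mul, CharTwo.two_eq_zero]

variable {K : Type*} [Field K] {m n : Type*} [Fintype m] [Fintype n]

theorem mulVecLin_fromBlocks_zero (A : Matrix m m K) (D : Matrix n n K) :
    (fromBlocks A 0 0 D).mulVecLin =
      (LinearEquiv.sumArrowLequivProdArrow m n K K).symm.toLinearMap ∘ₗ
        (A.mulVecLin.prodMap D.mulVecLin) ∘ₗ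
          (LinearEquiv.sumArrowLequivProdArrow m n K K).toLinearMap := by
  refine LinearMap.ext fun v => funext fun i => ?_
  rcases i with i | i <;> simp [fromBlocks_mulVec] <;> rfl

theorem rank_fromBlocks_zero (A : Matrix m m K) (D : Matrix n n K) :
    (fromBlocks A 0 0 D).rank = A.rank + D.rank := by
  have hrange : LinearMap.range (A.mulVecLin.prodMap D.mulVecLin) =
      LinearMap.range ((LinearMap.range A.mulVecLin).subtype.prodMap
        (LinearMap.range D.mulVecLin).subtype) := by
    simp only [LinearMap.range_prodMap, Submodule.range_subtype]
  rw [rank, mulVecLin_fromBlocks_zero, LinearMap.range_comp, LinearMap.range_comp,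
    LinearEquiv.range, Submodule.map_top, LinearEquiv.finrank_map_eq, hrange,
    LinearMap.finrank_range_of_inj
      (Prod.map_injective.2 ⟨Subtype.val_injective, Subtype.val_injective⟩),
    Module.finrank_prod, rank, rank]

theorem rank_fromBlocks_of_invertible₂₂ [DecidableEq m] [DecidableEq n] (A : Matrix m m K)
    (B : Matrix m n K) (C : Matrix n m K) (D : Matrix n n K) [Invertible D] :
    (fromBlocks A B C D).rank = (A - B * ⅟D * C).rank + D.rank := by
  rw [fromBlocks_eq_of_invertible₂₂, rank_mul_eq_left_of_isUnit_det,
    rank_mul_eq_right_of_isUnit_det, rank_fromBlocks_zero]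
  all_goals simp

end Matrix

def ext2SwapIso {V : Type} (G : SimpleGraph V) (N : Set V) : ext2 G N ≃g ext2 G N where
  toEquiv := (Equiv.refl V).sumCongr Equiv.boolNot
  map_rel_iff' := by rintro (i | b) (j | c) <;> rfl

section Omega2

variable {V : Type} [Fintype V]

theorem Bmat_submatrix_iso {W : Type} [Fintype W] {G : SimpleGraph V} {H : SimpleGraph W}
    (φ : G ≃g H) (x : V) : (Bmat H (φ x)).submatrix φ φ = Bmat G x := by
  ext i j
  simp [Bmat, adjMat, one_apply, single_apply, φ.injective.eq_iff, φ.map_adj_iff]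

theorem corankM_Bmat_iso {W : Type} [Fintype W] {G : SimpleGraph V} {H : SimpleGraph W}
    (φ : G ≃g H) (x : V) : corankM (Bmat H (φ x)) = corankM (Bmat G x) := by
  rw [corankM, corankM, ← Bmat_submatrix_iso φ, Fintype.card_congr φ.toEquiv]
  exact congrArg _ (rank_submatrix _ φ.toEquiv φ.toEquiv).symm

theorem corankM_Bmat_ext2_inr (G : SimpleGraph V) (N : Set V) :
    corankM (Bmat (ext2 G N) (Sum.inr true)) = corankM (Bmat (ext2 G N) (Sum.inr false)) :=
  corankM_Bmat_iso (ext2SwapIso G N) (Sum.inr false)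

theorem Bmat_ext2_inl (G : SimpleGraph V) (N : Set V) (x : V) :
    Bmat (ext2 G N) (Sum.inl x) =
      fromBlocks (Bmat G x) (replicateCol Bool (N.indicator 1))
        (replicateRow Bool (N.indicator 1)) 1 := by
  ext (i | b) (j | c) <;>
    simp [Bmat, adjMat, ext2, extAdj, Set.indicator, one_apply, single_apply] <;> congr

theorem corankM_Bmat_ext2_inl (G : SimpleGraph V) (N : Set V) (x : V) :
    corankM (Bmat (ext2 G N) (Sum.inl x)) = corankM (Bmat G x) := by
  let : Invertible (1 : Matrix Bool Bool (ZMod 2)) := invertibleOne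
  rw [corankM, corankM, Bmat_ext2_inl, rank_fromBlocks_of_invertible₂₂, invOf_one, Matrix.mul_one,
    replicateCol_mul_replicateRow_bool, sub_zero, rank_one, Fintype.card_sum]
  omega

end Omega2

theorem writhe_omega2_general {V : Type} [Fintype V] (G : SimpleGraph V) (N : Set V)
    (σ : V → Bool) :
    writhe (ext2 G N) (Sum.elim σ (fun c => c)) = writhe G σ ∧
    corankM (Bmat (ext2 G N) (Sum.inr true)) =
      corankM (Bmat (ext2 G N) (Sum.inr false)) := by
  have hinr := corankM_Bmat_ext2_inr G N
  refine ⟨?_, hinr⟩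
  rw [writhe, writhe, Fintype.sum_sum_type, Fintype.sum_bool, hinr]
  simp_rw [corankM_Bmat_ext2_inl]
  exact add_eq_left.2 (by simp)

/-- The writhe number is invariant under Ω_g2; moreover the coranks of
`B_u` and `B_v` at the two new vertices coincide. -/
theorem writhe_omega2 {V : Type} [Fintype V] (G : SimpleGraph V) (N : Set V)
    (σ : V → Bool) (h : corankM (adjMat G + 1) = 0) :
    writhe (ext2 G N) (Sum.elim σ (fun c => c)) = writhe G σ ∧
    corankM (Bmat (ext2 G N) (Sum.inr true)) =
      corankM (Bmat (ext2 G N) (Sum.inr false)) :=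
  writhe_omega2_general G N σ
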